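/- arXiv:1705.07350 — 2 statements merged into one kernel-verified Lean document; each statement's English description precedes it below -/
import Mathlib

section
/- Let Γ = Γ₁ ∗_Σ Γ₂ be an amalgamated free product with Comm¹_{Γᵢ}(Σ) = Σ for i ∈ {1,2}. If g, h ∈ Γ satisfy [Σ : Σ ∩ h(Σ ∩ gΣg⁻¹)h⁻¹] < ∞, then g ∈ Σ and h ∈ Σ. -/
/-!
Write `B` for the image of `Σ` in `Γ`. By the normal form theorem a nontrivial coset `Bg` contains
an element `x * u` with `x ∈ Γᵢ \ B` and `u` a reduced word not starting in `Γᵢ`. If `t ∈ B` and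
`(xu)⁻¹ t (xu) ∈ B`, then `x⁻¹ t x ∈ Γᵢ`, and unless it lies in `B`, conjugating it further by the
reduced word `u` cannot land in `B`. Hence `B ∩ (xu)B(xu)⁻¹ ≤ xBx⁻¹`, so `Comm¹_{Γᵢ}(Σ) = Σ`
forces `Comm¹_Γ(Σ) = Σ`. The theorem follows by applying this to `h` and `hg`, as
`h(B ∩ gBg⁻¹)h⁻¹` lies in both `hBh⁻¹` and `(hg)B(hg)⁻¹`.
-/

open Monoid PushoutI

/-- The conjugate subgroup `g S g⁻¹`. -/
def conjSub {G : Type*} [Group G] (g : G) (S : Subgroup G) : Subgroup G :=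
  S.map (MulAut.conj g).toMonoidHom

section conjSub

variable {G : Type*} [Group G]

theorem mem_conjSub {c x : G} {S : Subgroup G} : x ∈ conjSub c S ↔ c⁻¹ * x * c ∈ S := by
  constructor
  · rintro ⟨s, hs, rfl⟩
    simpa [MulAut.conj_apply, mul_assoc] using hs
  · intro hx
    exact ⟨c⁻¹ * x * c, hx, by simp [MulAut.conj_apply, mul_assoc]⟩

theorem conjSub_mul (a b : G) (S : Subgroup G) :
    conjSub (a * b) S = conjSub a (conjSub b S) := by
  ext x
  simp only [mem_conjSub, mul_inv_rev, mul_assoc]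

theorem conjSub_of_mem {c : G} {S : Subgroup G} (hc : c ∈ S) : conjSub c S = S := by
  ext x
  rw [mem_conjSub]
  constructor
  · intro hx
    simpa [mul_assoc] using S.mul_mem (S.mul_mem hc hx) (S.inv_mem hc)
  · intro hx
    exact S.mul_mem (S.mul_mem (S.inv_mem hc) hx) hc

theorem relIndex_conjSub (c : G) (K L : Subgroup G) :
    (conjSub c K).relIndex (conjSub c L) = K.relIndex L :=
  Subgroup.relIndex_map_map_of_injective K L (MulAut.conj c).injective

theorem relIndex_conjSub_mul_of_mem {c : G} {S : Subgroup G} (hc : c ∈ S) (g : G) :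
    (conjSub (c * g) S).relIndex S = (conjSub g S).relIndex S := by
  conv_lhs => rw [conjSub_mul, ← conjSub_of_mem hc, relIndex_conjSub, conjSub_of_mem hc]

end conjSub

namespace Monoid.PushoutI

variable {ι H : Type*} {G : ι → Type*} [Group H] [∀ i, Group (G i)] {φ : ∀ i, H →* G i}

theorem NormalWord.reduced {d : NormalWord.Transversal φ} (w : NormalWord d) :
    Reduced φ w.toWord := by
  rintro ⟨i, t⟩ hmem ht
  have e1 := (d.compl i).equiv_fst_eq_self_of_mem_of_one_mem (d.one_mem i) ht
  have e2 := (d.compl i).equiv_fst_eq_one_of_mem_of_one_mem (Subgroup.one_mem _)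
    (w.normalized i t hmem)
  rw [e1] at e2
  exact w.ne_one ⟨i, t⟩ hmem (congrArg Subtype.val e2)

theorem Reduced.neWord_inv {i j : ι} {w : CoprodI.NeWord G i j} (hw : Reduced φ w.toWord) :
    Reduced φ w.inv.toWord := by
  induction w with
  | singleton x hx =>
    rintro l (_ | ⟨_, ⟨⟩⟩)
    exact fun hr => hw ⟨_, x⟩ (List.mem_singleton.mpr rfl) (inv_mem_iff.mp hr)
  | append w₁ hne w₂ ih₁ ih₂ =>
    intro l hl
    rcases List.mem_append.mp hl with hl | hl
    · exact ih₂ (fun l hl => hw l (List.mem_append_right _ hl)) l hl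
    · exact ih₁ (fun l hl => hw l (List.mem_append_left _ hl)) l hl

theorem Reduced.ofCoprodI_neWord_prod_notMem_range (hφ : ∀ i, Function.Injective (φ i))
    {i j : ι} {w : CoprodI.NeWord G i j} (hw : Reduced φ w.toWord) :
    ofCoprodI (φ := φ) w.prod ∉ (base φ).range := fun hmem =>
  w.toList_ne_nil (congrArg CoprodI.Word.toList (hw.eq_empty_of_mem_range hφ hmem))

theorem Reduced.conj_of_notMem_range (hφ : ∀ i, Function.Injective (φ i))
    {w : CoprodI.Word G} (hw : Reduced φ w) {j : ι} {y : G j} (hy : y ∉ (φ j).range)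
    (hwj : w.fstIdx ≠ some j) :
    (ofCoprodI (φ := φ) w.prod)⁻¹ * of j y * ofCoprodI w.prod ∉ (base φ).range := by
  have hy1 : y ≠ 1 := fun h => hy (h ▸ Subgroup.one_mem _)
  set y' := CoprodI.NeWord.singleton y hy1
  have hy' : Reduced φ y'.toWord := by
    rintro l (_ | ⟨_, ⟨⟩⟩)
    exact hy
  by_cases hemp : w = CoprodI.Word.empty
  · subst hemp
    simpa [y'] using hy'.ofCoprodI_neWord_prod_notMem_range hφ
  obtain ⟨k, l, w', rfl⟩ := CoprodI.NeWord.of_word w hemp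
  have hkj : k ≠ j := fun h => hwj (by simp [CoprodI.Word.fstIdx, CoprodI.NeWord.toWord, h])
  -- `w⁻¹ y w` is again a reduced word, since `w` does not start in the factor of `y`.
  have hV : Reduced φ ((w'.inv.append hkj y').append hkj.symm w').toWord := by
    intro l hl
    rcases List.mem_append.mp hl with hl | hl
    · rcases List.mem_append.mp hl with hl | hl
      · exact hw.neWord_inv l hl
      · exact hy' l hl
    · exact hw l hl
  change (ofCoprodI w'.prod)⁻¹ * _ * ofCoprodI w'.prod ∉ _
  simpa [y', CoprodI.NeWord.append_prod, CoprodI.NeWord.inv_prod] using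
    hV.ofCoprodI_neWord_prod_notMem_range hφ

theorem inf_conjSub_mul_le (hφ : ∀ i, Function.Injective (φ i)) {i : ι} (x : G i)
    {v : CoprodI.Word G} (hv : Reduced φ v) (hvi : v.fstIdx ≠ some i) :
    (base φ).range ⊓ conjSub (of i x * ofCoprodI v.prod) (base φ).range ≤
      conjSub (of i x) (base φ).range := by
  intro t ht
  obtain ⟨⟨τ, rfl⟩, ht⟩ := Subgroup.mem_inf.mp ht
  rw [mem_conjSub] at ht
  rw [mem_conjSub]
  by_contra hout
  have hletter : (of i x)⁻¹ * base φ τ * of i x = of (φ := φ) i (x⁻¹ * φ i τ * x) := by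
    simp [of_apply_eq_base]
  refine hv.conj_of_notMem_range hφ (y := x⁻¹ * φ i τ * x) ?_ hvi ?_
  · rintro ⟨r, hr⟩
    exact hout ⟨r, by rw [hletter, ← hr, of_apply_eq_base]⟩
  · rw [← hletter]
    simpa [mul_assoc] using ht

theorem Reduced.eq_empty_of_relIndex_ne_zero (hφ : ∀ i, Function.Injective (φ i))
    (hyp : ∀ (i : ι) (x : G i), x ∉ (φ i).range →
      (conjSub (of (φ := φ) i x) (base φ).range).relIndex (base φ).range = 0)
    {w : CoprodI.Word G} (hw : Reduced φ w)
    (hfin : (conjSub (ofCoprodI w.prod) (base φ).range).relIndex (base φ).range ≠ 0) :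
    w = .empty := by
  cases w using CoprodI.Word.consRecOn with
  | empty => rfl
  | cons i x v hvi _ =>
    have hx : x ∉ (φ i).range := hw ⟨i, x⟩ List.mem_cons_self
    have hv : Reduced φ v := fun l hl => hw l (List.mem_cons_of_mem _ hl)
    rw [CoprodI.Word.prod_cons, map_mul, ofCoprodI_of, ← Subgroup.inf_relIndex_left] at hfin
    exact absurd (Subgroup.relIndex_eq_zero_of_le_left (inf_conjSub_mul_le hφ x hv hvi)
      (hyp i x hx)) hfin

theorem mem_base_range_of_relIndex_ne_zero (hφ : ∀ i, Function.Injective (φ i))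
    (hyp : ∀ (i : ι) (x : G i), x ∉ (φ i).range →
      (conjSub (of (φ := φ) i x) (base φ).range).relIndex (base φ).range = 0)
    {g : PushoutI φ} (hg : (conjSub g (base φ).range).relIndex (base φ).range ≠ 0) :
    g ∈ (base φ).range := by
  classical
  obtain ⟨d⟩ := NormalWord.transversal_nonempty φ hφ
  set w : NormalWord d := g • NormalWord.empty
  have hgw : g = base φ w.head * ofCoprodI w.toWord.prod :=
    calc g = w.prod := by simp [w, NormalWord.prod_smul]
      _ = _ := rfl
  rw [hgw, relIndex_conjSub_mul_of_mem (MonoidHom.mem_range.mpr ⟨w.head, rfl⟩)] at hg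
  rw [hgw, w.reduced.eq_empty_of_relIndex_ne_zero hφ hyp hg]
  simp

end Monoid.PushoutI

/-- If `Comm¹_{Γᵢ}(Σ) = Σ` for `i = 1, 2` and `[Σ : Σ ∩ h(Σ ∩ gΣg⁻¹)h⁻¹] < ∞`, then
`g, h ∈ Σ`. -/
theorem stmt9 {H : Type*} {G : Bool → Type*} [Group H] [∀ i, Group (G i)]
    (φ : ∀ i, H →* G i) (hφ : ∀ i, Function.Injective (φ i))
    (hyp : ∀ (i : Bool) (x : G i), x ∉ (φ i).range →
      (conjSub (PushoutI.of (φ := φ) i x) (PushoutI.base φ).range).relIndex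
        (PushoutI.base φ).range = 0)
    (g h : PushoutI φ)
    (hfin : (conjSub h ((PushoutI.base φ).range ⊓
        conjSub g (PushoutI.base φ).range)).relIndex (PushoutI.base φ).range ≠ 0) :
    g ∈ (PushoutI.base φ).range ∧ h ∈ (PushoutI.base φ).range := by
  set B := (PushoutI.base φ).range
  have hh : h ∈ B := mem_base_range_of_relIndex_ne_zero hφ hyp fun h0 =>
    hfin (Subgroup.relIndex_eq_zero_of_le_left (Subgroup.map_mono inf_le_left) h0)
  have hhg : h * g ∈ B := mem_base_range_of_relIndex_ne_zero hφ hyp fun h0 =>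
    hfin (Subgroup.relIndex_eq_zero_of_le_left
      (by rw [conjSub_mul]; exact Subgroup.map_mono inf_le_right) h0)
  exact ⟨by simpa using B.mul_mem (B.inv_mem hh) hhg, hh⟩
end

section
/- Let Γ₀ be a group and Σ₀ ≤ Γ₀ a subgroup such that: (1) [Σ₀ : Σ₀ ∩ gΣ₀g⁻¹] = ∞ for every g ∈ Γ₀ \ Σ₀, and (2) the centralizer in Γ₀ of every finite-index subgroup of Σ₀ is trivial. Let G = Γ₀ × Γ₀ and let Σ = {(g,g) : g ∈ Σ₀} be the diagonal copy of Σ₀. Then every h = (h₁,h₂) ∈ G with [Σ : Σ ∩ hΣh⁻¹] < ∞ lies in Σ. -/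
theorem mem_conjSub_iff {G : Type*} [Group G] {x g : G} {S : Subgroup G} :
    g ∈ conjSub x S ↔ x⁻¹ * g * x ∈ S := by
  rw [conjSub, Subgroup.mem_map_equiv, MulAut.conj_symm_apply]

section Diagonal

variable {G : Type*} [Group G] {S : Subgroup G}

local notation "Δ" => MonoidHom.prod (MonoidHom.id G) (MonoidHom.id G)

theorem mem_map_diag_iff {p : G × G} : p ∈ S.map Δ ↔ p.1 ∈ S ∧ p.1 = p.2 := by
  constructor
  · rintro ⟨s, hs, rfl⟩
    exact ⟨hs, rfl⟩
  · rintro ⟨hp, hp₁₂⟩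
    exact ⟨p.1, hp, Prod.ext rfl hp₁₂⟩

theorem mem_comap_diag_conjSub_iff {h : G × G} {g : G} :
    g ∈ (conjSub h (S.map Δ)).comap Δ ↔
      h.1⁻¹ * g * h.1 ∈ S ∧ h.1⁻¹ * g * h.1 = h.2⁻¹ * g * h.2 := by
  rw [Subgroup.mem_comap, mem_conjSub_iff, mem_map_diag_iff]
  rfl

theorem mem_centralizer_comap_diag_conjSub (h : G × G) :
    h.2 * h.1⁻¹ ∈ Subgroup.centralizer ((conjSub h (S.map Δ)).comap Δ : Set G) := by
  rw [Subgroup.mem_centralizer_iff]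
  intro g hg
  have hconj := (mem_comap_diag_conjSub_iff.mp hg).2
  calc g * (h.2 * h.1⁻¹) = h.2 * (h.2⁻¹ * g * h.2) * h.1⁻¹ := by group
    _ = h.2 * (h.1⁻¹ * g * h.1) * h.1⁻¹ := by rw [hconj]
    _ = h.2 * h.1⁻¹ * g := by group

theorem comap_diag_conjSub_diag (x : G) : (conjSub (x, x) (S.map Δ)).comap Δ = conjSub x S := by
  ext g
  simp only [mem_comap_diag_conjSub_iff, mem_conjSub_iff, and_true]

end Diagonal

/-- For the diagonal copy `S` of `S₀` in `Γ₀ × Γ₀`, under conditions (1) and (2),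
any `h` with `[S : S ∩ hSh⁻¹] < ∞` lies in `S`. -/
theorem stmt14 {Γ₀ : Type*} [Group Γ₀] (S₀ : Subgroup Γ₀)
    (h1 : ∀ g : Γ₀, g ∉ S₀ → (conjSub g S₀).relIndex S₀ = 0)
    (h2 : ∀ S₁ : Subgroup Γ₀, S₁ ≤ S₀ → S₁.relIndex S₀ ≠ 0 →
      Subgroup.centralizer (S₁ : Set Γ₀) = ⊥) :
    ∀ h : Γ₀ × Γ₀,
      (conjSub h (S₀.map ((MonoidHom.id Γ₀).prod (MonoidHom.id Γ₀)))).relIndex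
        (S₀.map ((MonoidHom.id Γ₀).prod (MonoidHom.id Γ₀))) ≠ 0 →
      h ∈ S₀.map ((MonoidHom.id Γ₀).prod (MonoidHom.id Γ₀)) := by
  intro h hrel
  set T := (conjSub h (S₀.map ((MonoidHom.id Γ₀).prod (MonoidHom.id Γ₀)))).comap
    ((MonoidHom.id Γ₀).prod (MonoidHom.id Γ₀))
  have hT : T.relIndex S₀ ≠ 0 := by rwa [Subgroup.relIndex_comap]
  have hcent : h.2 * h.1⁻¹ ∈ Subgroup.centralizer ((T ⊓ S₀ : Subgroup Γ₀) : Set Γ₀) :=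
    Subgroup.centralizer_le inf_le_left (mem_centralizer_comap_diag_conjSub h)
  rw [h2 (T ⊓ S₀) inf_le_right (by rwa [Subgroup.inf_relIndex_right]), Subgroup.mem_bot,
    mul_inv_eq_one] at hcent
  obtain ⟨x, y⟩ := h
  obtain rfl : x = y := hcent.symm
  have hx : x ∈ S₀ := by
    by_contra hx
    apply hT
    rw [show T = conjSub x S₀ from comap_diag_conjSub_diag x]
    exact h1 x hx
  exact mem_map_diag_iff.mpr ⟨hx, rfl⟩
end
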